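/- Let τ be a chain preorder on {1,…,n} with partial sums s₁ < s₂ < ⋯ < s_p = n, and let k, ℓ ∈ ℕ. The number of points (a₁,…,a_{nk}) ∈ ℕ^{nk} satisfying a₁+⋯+a_{s_i k} ≤ s_i ℓ for 1 ≤ i ≤ p equals the number of points (b₁,…,b_{nℓ}) ∈ ℕ^{nℓ} satisfying b_{s_i ℓ + 1}+⋯+b_{nℓ} ≤ (n−s_i)k for 0 ≤ i ≤ p−1. -/

import Mathlib

/-!
Read `a ∈ ℕ^K` with `∑ a ≤ L` as a lattice path in a `K × L` box whose height after `t` steps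
is the prefix sum `P t`, and let `b ∈ ℕ^L` count, for each `j`, the `t` with `P (t + 1) = j + 1`.
This is transposition of the path: the tail sum of `b` from `d` counts the `t` with
`d < P (t + 1)`, so `P c ≤ d` holds iff that tail sum is at most `K - c`; both say that the cell
`(c, d)` lies above the path. Hence `b` determines the prefix sums of `a`, and so `a`. The same
construction with `K` and `L` exchanged is injective too, so both are bijections between finite
sets, and for `c = sᵢ k`, `d = sᵢ ℓ` the cell criterion turns one family of defining
inequalities into the other.
-/

open Finset

theorem Set.bijOn_of_injOn_of_injOn {α β : Type*} {s : Set α} {t : Set β} {f : α → β}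
    {g : β → α} (hf : MapsTo f s t) (hf' : InjOn f s) (hg : MapsTo g t s) (hg' : InjOn g t)
    (ht : t.Finite) : BijOn f s t := by
  have hs : s.Finite := ht.of_injOn hf hf'
  have hcard : t.ncard ≤ (f '' s).ncard := by
    rw [hf'.ncard_image]
    exact ncard_le_ncard_of_injOn g hg hg' hs
  rw [← eq_of_subset_of_ncard_le hf.image_subset hcard ht]
  exact hf'.bijOn_image

namespace LatticePath

variable {K L : ℕ}

def prefixSum (a : Fin K → ℕ) (m : ℕ) : ℕ :=
  ∑ t ∈ univ.filter (fun t : Fin K => (t : ℕ) < m), a t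

def tailSum (b : Fin L → ℕ) (m : ℕ) : ℕ :=
  ∑ j ∈ univ.filter (fun j : Fin L => m ≤ (j : ℕ)), b j

def conjugate (L : ℕ) (a : Fin K → ℕ) (j : Fin L) : ℕ :=
  #{t : Fin K | prefixSum a (t + 1) = j + 1}

def sumLE (K L : ℕ) : Set (Fin K → ℕ) := {a | ∑ t, a t ≤ L}

lemma finite_sumLE (K L : ℕ) : (sumLE K L).Finite :=
  (Set.finite_Iic fun _ => L).subset fun _ ha t =>
    (single_le_sum (fun _ _ => Nat.zero_le _) (mem_univ t)).trans ha

lemma monotone_prefixSum (a : Fin K → ℕ) : Monotone (prefixSum a) := fun m m' h =>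
  sum_le_sum_of_subset fun t => by simp only [mem_filter, mem_univ, true_and]; omega

@[simp] lemma prefixSum_zero (a : Fin K → ℕ) : prefixSum a 0 = 0 := by
  simp [prefixSum]

lemma prefixSum_succ (a : Fin K → ℕ) (t : Fin K) :
    prefixSum a (t + 1) = prefixSum a t + a t := by
  have : univ.filter (fun u : Fin K => (u : ℕ) < t + 1) =
      insert t (univ.filter fun u : Fin K => (u : ℕ) < t) := by
    ext u
    simp only [mem_filter, mem_univ, true_and, mem_insert, Fin.ext_iff]
    omega
  rw [prefixSum, prefixSum, this, sum_insert (by simp), add_comm]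

lemma prefixSum_of_le (a : Fin K → ℕ) {m : ℕ} (h : K ≤ m) : prefixSum a m = ∑ t, a t := by
  rw [prefixSum, filter_true_of_mem fun t _ => t.isLt.trans_le h]

lemma tailSum_zero (b : Fin L → ℕ) : tailSum b 0 = ∑ j, b j := by
  simp [tailSum]

lemma tailSum_conjugate {a : Fin K → ℕ} (ha : a ∈ sumLE K L) (d : ℕ) :
    tailSum (conjugate L a) d = #{t : Fin K | d < prefixSum a (t + 1)} := by
  have hle (t : Fin K) : prefixSum a (t + 1) ≤ L :=
    (monotone_prefixSum a t.isLt).trans ((prefixSum_of_le a le_rfl).trans_le ha)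
  rw [card_eq_sum_card_fiberwise (f := fun t : Fin K => prefixSum a (t + 1) - 1)
    (t := (range L).filter (d ≤ ·)) ?maps]
  · simp only [tailSum, conjugate]
    rw [sum_filter, Fin.sum_univ_eq_sum_range
      (fun j => if d ≤ j then #{t : Fin K | prefixSum a (t + 1) = j + 1} else 0), ← sum_filter]
    refine sum_congr rfl fun j hj => ?_
    simp only [mem_filter] at hj
    rw [filter_filter]
    exact congr_arg card (filter_congr fun t _ => by omega)
  case maps =>
    intro t ht
    simp only [coe_filter, mem_univ, true_and, Set.mem_ofPred_eq, mem_range] at ht ⊢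
    have := hle t
    omega

lemma prefixSum_le_iff_tailSum_conjugate_le {a : Fin K → ℕ} (ha : a ∈ sumLE K L) (c d : ℕ) :
    prefixSum a c ≤ d ↔ tailSum (conjugate L a) d ≤ K - c := by
  wlog hc : c ≤ K generalizing c
  · rw [prefixSum_of_le a (le_of_not_ge hc), ← prefixSum_of_le a le_rfl, this K le_rfl]
    omega
  have hsplit := card_filter_add_card_filter_not (s := univ)
    (fun t : Fin K => prefixSum a (t + 1) ≤ d)
  simp only [not_le, card_univ, Fintype.card_fin] at hsplit
  rw [tailSum_conjugate ha]
  rcases c with _ | c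
  · simp only [prefixSum_zero, zero_le, true_iff, Nat.sub_zero]
    omega
  · have := Tuple.lt_card_le_iff_apply_le_of_monotone (j := ⟨c, hc⟩) (a := d)
      (f := fun t : Fin K => prefixSum a (t + 1))
      fun u v h => monotone_prefixSum a (by simpa using h)
    simp only at this
    omega

lemma mapsTo_conjugate (K L : ℕ) : Set.MapsTo (conjugate L) (sumLE K L) (sumLE L K) :=
  fun a ha => by
    simpa [sumLE, ← tailSum_zero] using (prefixSum_le_iff_tailSum_conjugate_le ha 0 0).1 (by simp)

lemma injOn_conjugate (K L : ℕ) : Set.InjOn (conjugate L) (sumLE K L) := by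
  intro a ha a' ha' h
  have hP (c : ℕ) : prefixSum a c = prefixSum a' c := eq_of_forall_ge_iff fun d => by
    rw [prefixSum_le_iff_tailSum_conjugate_le ha, prefixSum_le_iff_tailSum_conjugate_le ha', h]
  funext t
  have h₁ := prefixSum_succ a t
  have h₂ := prefixSum_succ a' t
  rw [hP, hP] at h₁
  omega

lemma bijOn_conjugate (K L : ℕ) : Set.BijOn (conjugate L) (sumLE K L) (sumLE L K) :=
  Set.bijOn_of_injOn_of_injOn (mapsTo_conjugate K L) (injOn_conjugate K L)
    (mapsTo_conjugate L K) (injOn_conjugate L K) (finite_sumLE L K)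

end LatticePath

open LatticePath in
theorem chain_matrix_ehrhart_zeta_duality_general (n p k l : ℕ) (hp : 1 ≤ p) (s : ℕ → ℕ)
    (hs0 : s 0 = 0) (hsp : s p = n) :
    Nat.card {a : Fin (n * k) → ℕ //
        ∀ i, 1 ≤ i → i ≤ p →
          ∑ j ∈ Finset.univ.filter (fun j : Fin (n * k) => (j : ℕ) < s i * k), a j ≤ s i * l} =
      Nat.card {b : Fin (n * l) → ℕ //
        ∀ i < p,
          ∑ j ∈ Finset.univ.filter (fun j : Fin (n * l) => s i * l ≤ (j : ℕ)), b j ≤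
            (n - s i) * k} := by
  set B := {b : Fin (n * l) → ℕ | ∀ i < p, tailSum b (s i * l) ≤ (n - s i) * k}
  have hcell {a} (ha : a ∈ sumLE (n * k) (n * l)) (i : ℕ) :
      prefixSum a (s i * k) ≤ s i * l ↔
        tailSum (conjugate (n * l) a) (s i * l) ≤ (n - s i) * k := by
    rw [Nat.sub_mul]
    exact prefixSum_le_iff_tailSum_conjugate_le ha _ _
  have hB : B ⊆ sumLE (n * l) (n * k) := fun b hb => by
    simpa [sumLE, hs0, tailSum_zero] using hb 0 hp
  have hA : sumLE (n * k) (n * l) ∩ conjugate (n * l) ⁻¹' B =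
      {a | ∀ i, 1 ≤ i → i ≤ p → prefixSum a (s i * k) ≤ s i * l} := by
    ext a
    refine ⟨fun ⟨ha, hb⟩ i hi hip => ?_, fun hA => ?_⟩
    · rcases hip.lt_or_eq with hip | rfl
      · exact (hcell ha i).2 (hb i hip)
      · rwa [hsp, prefixSum_of_le a le_rfl]
    · have ha : a ∈ sumLE (n * k) (n * l) := by
        simpa [sumLE, hsp, prefixSum_of_le] using hA p hp le_rfl
      refine ⟨ha, fun i hip => (hcell ha i).1 ?_⟩
      rcases Nat.eq_zero_or_pos i with rfl | hi
      · simp [hs0]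
      · exact hA i hi hip.le
  have hbij := (bijOn_conjugate (n * k) (n * l)).subset_right hB
  rw [hA] at hbij
  exact Nat.card_congr hbij.equiv

/-- for a chain preorder with partial sums
`0 = s₀ < s₁ < ⋯ < s_p = n` and `k, ℓ ∈ ℕ`, the number of points
`a ∈ ℕ^{nk}` with `a₁+⋯+a_{s_i k} ≤ s_i ℓ` for `1 ≤ i ≤ p` equals the number
of points `b ∈ ℕ^{nℓ}` with `b_{s_i ℓ+1}+⋯+b_{nℓ} ≤ (n−s_i)k` for
`0 ≤ i ≤ p−1`. -/
theorem chain_matrix_ehrhart_zeta_duality (n p k l : ℕ) (hp : 1 ≤ p) (s : ℕ → ℕ)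
    (hs0 : s 0 = 0) (hsp : s p = n) (hmono : ∀ i < p, s i < s (i + 1)) :
    Nat.card {a : Fin (n * k) → ℕ //
        ∀ i, 1 ≤ i → i ≤ p →
          ∑ j ∈ Finset.univ.filter (fun j : Fin (n * k) => (j : ℕ) < s i * k), a j ≤ s i * l} =
      Nat.card {b : Fin (n * l) → ℕ //
        ∀ i < p,
          ∑ j ∈ Finset.univ.filter (fun j : Fin (n * l) => s i * l ≤ (j : ℕ)), b j ≤
            (n - s i) * k} :=
  chain_matrix_ehrhart_zeta_duality_general n p k l hp s hs0 hsp
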